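/- arXiv:2505.08881 — 7 statements merged into one kernel-verified Lean document; each statement's English description precedes it below -/
import Mathlib

section
/- For p = (p12,p13,p14,p23,p24,p34) a vector of nonnegative reals, the determinant of the symmetric 4×4 matrix L(p) with zero diagonal and off-diagonal entries L(p)_{ij}=p_{ij} equals -(√(p12 p34)+√(p13 p24)+√(p14 p23))·(-√(p12 p34)+√(p13 p24)+√(p14 p23))·(√(p12 p34)-√(p13 p24)+√(p14 p23))·(√(p12 p34)+√(p13 p24)-√(p14 p23)). -/
/-!
Expanding the determinant of a symmetric 4 × 4 matrix with zero diagonal gives the quadratic form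
`a² + b² + c² - 2ab - 2bc - 2ca` in the three products `a = p12 p34`, `b = p13 p24`, `c = p14 p23`
of entries on complementary index pairs. With `a = x²`, `b = y²`, `c = z²` this is Heron's
expression `-(x + y + z)(-x + y + z)(x - y + z)(x + y - z)`, and for nonnegative entries one may
take `x = √(p12 p34)`, `y = √(p13 p24)`, `z = √(p14 p23)`.
-/

theorem Matrix.det_symm_zero_diag_fin_four {R : Type*} [CommRing R] (p12 p13 p14 p23 p24 p34 : R) :
    (!![0, p12, p13, p14;
        p12, 0, p23, p24;
        p13, p23, 0, p34;
        p14, p24, p34, 0]).det =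
      (p12 * p34) ^ 2 + (p13 * p24) ^ 2 + (p14 * p23) ^ 2
        - 2 * (p12 * p34) * (p13 * p24) - 2 * (p13 * p24) * (p14 * p23)
        - 2 * (p14 * p23) * (p12 * p34) := by
  rw [Matrix.det_succ_row_zero, Fin.sum_univ_four]
  simp [Matrix.det_fin_three, Fin.succAbove]
  ring

theorem heron_factorization {R : Type*} [CommRing R] (x y z : R) :
    -(x + y + z) * (-x + y + z) * (x - y + z) * (x + y - z) =
      (x ^ 2) ^ 2 + (y ^ 2) ^ 2 + (z ^ 2) ^ 2
        - 2 * x ^ 2 * y ^ 2 - 2 * y ^ 2 * z ^ 2 - 2 * z ^ 2 * x ^ 2 := by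
  ring

theorem det_L_eq (p12 p13 p14 p23 p24 p34 : ℝ)
    (h12 : 0 ≤ p12) (h13 : 0 ≤ p13) (h14 : 0 ≤ p14)
    (h23 : 0 ≤ p23) (h24 : 0 ≤ p24) (h34 : 0 ≤ p34) :
    (!![(0:ℝ), p12, p13, p14;
        p12, 0, p23, p24;
        p13, p23, 0, p34;
        p14, p24, p34, 0]).det =
      -(Real.sqrt (p12*p34) + Real.sqrt (p13*p24) + Real.sqrt (p14*p23))
        * (-Real.sqrt (p12*p34) + Real.sqrt (p13*p24) + Real.sqrt (p14*p23))
        * (Real.sqrt (p12*p34) - Real.sqrt (p13*p24) + Real.sqrt (p14*p23))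
        * (Real.sqrt (p12*p34) + Real.sqrt (p13*p24) - Real.sqrt (p14*p23)) := by
  rw [heron_factorization, Real.sq_sqrt (mul_nonneg h12 h34), Real.sq_sqrt (mul_nonneg h13 h24),
    Real.sq_sqrt (mul_nonneg h14 h23), Matrix.det_symm_zero_diag_fin_four]
end

section
/- A point p = (p12,p13,p14,p23,p24,p34) with nonnegative entries lies in Δ(𝕋₂) (i.e. satisfies √(p_{ij}p_{kl}) + √(p_{ik}p_{jl}) ≥ √(p_{il}p_{jk}) for all choices of distinct i,j,k,l) if and only if the symmetric 4×4 matrix L(p) with zero diagonal and entries p_{ij} off-diagonal has at most one positive eigenvalue. -/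
/-- The symmetric matrix `L(p)` associated to a vector `p ∈ ⋀² ℝ⁴`. -/
def Lmat (p12 p13 p14 p23 p24 p34 : ℝ) : Matrix (Fin 4) (Fin 4) ℝ :=
  !![0, p12, p13, p14;
     p12, 0, p23, p24;
     p13, p23, 0, p34;
     p14, p24, p34, 0]

/-!
With `x = p12 p34`, `y = p13 p24`, `z = p14 p23`, Heron's formula shows that the triangle
inequalities between `√x, √y, √z` hold iff `x² + y² + z² - 2xy - 2yz - 2zx ≤ 0`, and this
expression is `det L(p)`. Let `μ₁ ≤ μ₂ ≤ μ₃ ≤ μ₄` be the eigenvalues of `L(p)`. Then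
`∑ μᵢ = tr L(p) = 0` and `∑ μᵢ³ = tr L(p)³ ≥ 0`, the latter because `L(p)` has nonnegative
entries. Under these two constraints, two positive eigenvalues force the other two to be negative,
so `det L(p) = ∏ μᵢ ≤ 0` holds exactly when `μ₃ ≤ 0`.
-/

open Finset Matrix

theorem Finset.card_filter_comp_equiv {ι κ : Type*} [Fintype ι] [Fintype κ] (e : ι ≃ κ)
    (p : κ → Prop) [DecidablePred p] : #{i | p (e i)} = #{j | p j} := by
  rw [← card_map e.toEmbedding, map_filter, map_univ_equiv]
  simp

theorem Fin.card_filter_lt_lt_iff_of_monotone {α : Type*} [LinearOrder α] {n : ℕ} {f : Fin n → α}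
    (hf : Monotone f) (a : α) (k : Fin n) : #{i | a < f i} < n - k ↔ f k ≤ a := by
  constructor
  · intro hcard
    by_contra! hk
    have hsub : Ici k ⊆ ({i | a < f i} : Finset _) := fun i hi =>
      mem_filter.2 ⟨mem_univ i, hk.trans_le (hf (mem_Ici.1 hi))⟩
    have := card_le_card hsub
    rw [Fin.card_Ici] at this
    omega
  · intro hk
    have hsub : ({i | a < f i} : Finset _) ⊆ Ioi k := fun i hi =>
      mem_Ioi.2 (lt_of_not_ge fun hik => ((hf hik).trans hk).not_gt (mem_filter.1 hi).2)
    have := card_le_card hsub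
    rw [Fin.card_Ioi] at this
    omega

theorem sum_cube_of_sum_eq_zero {a b c d : ℝ} (h : a + b + c + d = 0) :
    a ^ 3 + b ^ 3 + c ^ 3 + d ^ 3 = -3 * (b + c) * (c + d) * (d + b) := by
  rw [show a = -(b + c + d) by linarith]
  ring

theorem mul_nonpos_iff_of_sum_eq_zero_of_sum_cube_nonneg {a b c d : ℝ} (hab : a ≤ b) (hbc : b ≤ c)
    (hcd : c ≤ d) (hsum : a + b + c + d = 0) (hcube : 0 ≤ a ^ 3 + b ^ 3 + c ^ 3 + d ^ 3) :
    a * b * c * d ≤ 0 ↔ c ≤ 0 := by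
  constructor
  · intro hprod
    by_contra! hc
    -- otherwise `a` is the only negative value, and the cube sum is negative
    have hb : b < 0 := by
      by_contra! hb
      rw [sum_cube_of_sum_eq_zero hsum] at hcube
      nlinarith [mul_pos (mul_pos (add_pos_of_nonneg_of_pos hb hc) (by linarith : 0 < c + d))
        (by linarith : 0 < d + b)]
    nlinarith [mul_pos (mul_pos_of_neg_of_neg (hab.trans_lt hb) hb) (mul_pos hc (hc.trans_le hcd))]
  · intro hc
    have hd : 0 ≤ d := by linarith
    rw [mul_assoc]
    exact mul_nonpos_of_nonneg_of_nonpos (mul_nonneg_of_nonpos_of_nonpos (by linarith) (by linarith))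
      (mul_nonpos_of_nonpos_of_nonneg hc hd)

theorem prod_nonpos_iff_card_pos_le_one {μ : Fin 4 → ℝ} (hsum : ∑ i, μ i = 0)
    (hcube : 0 ≤ ∑ i, μ i ^ 3) : ∏ i, μ i ≤ 0 ↔ #{i | 0 < μ i} ≤ 1 := by
  set σ := Tuple.sort μ
  have hmono : Monotone (μ ∘ σ) := Tuple.monotone_sort μ
  rw [← Equiv.sum_comp σ] at hsum hcube
  rw [← Equiv.prod_comp σ, ← card_filter_comp_equiv σ, ← Nat.lt_succ_iff]
  simp only [Fin.sum_univ_four, Fin.prod_univ_four] at hsum hcube ⊢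
  exact (mul_nonpos_iff_of_sum_eq_zero_of_sum_cube_nonneg (hmono (by decide))
    (hmono (by decide)) (hmono (by decide)) hsum hcube).trans
    (Fin.card_filter_lt_lt_iff_of_monotone hmono 0 2).symm

theorem triangle_iff_heron_nonneg {a b c : ℝ} (ha : 0 ≤ a) (hb : 0 ≤ b) (hc : 0 ≤ c) :
    (a ≤ b + c ∧ b ≤ a + c ∧ c ≤ a + b) ↔
      0 ≤ (a + b + c) * (-a + b + c) * (a - b + c) * (a + b - c) := by
  constructor
  · rintro ⟨h₁, h₂, h₃⟩
    have := add_nonneg (add_nonneg ha hb) hc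
    apply_rules [mul_nonneg] <;> linarith
  · intro h
    refine ⟨?_, ?_, ?_⟩ <;> by_contra! hlt
    · nlinarith [mul_pos (mul_pos (by linarith : 0 < a + b + c) (by linarith : 0 < a - b + c))
        (by linarith : 0 < a + b - c)]
    · nlinarith [mul_pos (mul_pos (by linarith : 0 < a + b + c) (by linarith : 0 < -a + b + c))
        (by linarith : 0 < a + b - c)]
    · nlinarith [mul_pos (mul_pos (by linarith : 0 < a + b + c) (by linarith : 0 < -a + b + c))
        (by linarith : 0 < a - b + c)]

theorem sqrt_triangle_iff {x y z : ℝ} (hx : 0 ≤ x) (hy : 0 ≤ y) (hz : 0 ≤ z) :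
    (√x ≤ √y + √z ∧ √y ≤ √x + √z ∧ √z ≤ √x + √y) ↔
      x ^ 2 + y ^ 2 + z ^ 2 - 2 * x * y - 2 * y * z - 2 * z * x ≤ 0 := by
  obtain ⟨a, ha, rfl⟩ : ∃ a, 0 ≤ a ∧ a ^ 2 = x := ⟨√x, Real.sqrt_nonneg x, Real.sq_sqrt hx⟩
  obtain ⟨b, hb, rfl⟩ : ∃ b, 0 ≤ b ∧ b ^ 2 = y := ⟨√y, Real.sqrt_nonneg y, Real.sq_sqrt hy⟩
  obtain ⟨c, hc, rfl⟩ : ∃ c, 0 ≤ c ∧ c ^ 2 = z := ⟨√z, Real.sqrt_nonneg z, Real.sq_sqrt hz⟩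
  rw [Real.sqrt_sq ha, Real.sqrt_sq hb, Real.sqrt_sq hc, triangle_iff_heron_nonneg ha hb hc,
    ← neg_nonneg]
  ring_nf

theorem Matrix.IsHermitian.trace_pow_eq_sum_eigenvalues_pow {𝕜 n : Type*} [RCLike 𝕜] [Fintype n]
    [DecidableEq n] {A : Matrix n n 𝕜} (hA : A.IsHermitian) (k : ℕ) :
    (A ^ k).trace = ∑ i, (hA.eigenvalues i : 𝕜) ^ k := by
  conv_lhs => rw [hA.spectral_theorem, ← map_pow, Unitary.conjStarAlgAut_apply, trace_mul_cycle,
    Unitary.coe_star_mul_self, one_mul, diagonal_pow, trace_diagonal]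
  rfl

section Lmat

variable (p12 p13 p14 p23 p24 p34 : ℝ)

theorem trace_Lmat : (Lmat p12 p13 p14 p23 p24 p34).trace = 0 := by
  simp [Lmat, Matrix.trace, Fin.sum_univ_four]

theorem trace_Lmat_pow_three : (Lmat p12 p13 p14 p23 p24 p34 ^ 3).trace =
    6 * (p12 * p13 * p23 + p12 * p14 * p24 + p13 * p14 * p34 + p23 * p24 * p34) := by
  simp [Lmat, pow_succ, Matrix.trace, Fin.sum_univ_four]
  ring

theorem det_Lmat : (Lmat p12 p13 p14 p23 p24 p34).det =
    (p12 * p34) ^ 2 + (p13 * p24) ^ 2 + (p14 * p23) ^ 2 - 2 * (p12 * p34) * (p13 * p24)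
      - 2 * (p13 * p24) * (p14 * p23) - 2 * (p14 * p23) * (p12 * p34) := by
  simp [Lmat, Matrix.det_succ_row_zero, Fin.sum_univ_succ, Fin.succAbove]
  ring

end Lmat

/-- A nonnegative vector `p` lies in `Δ(𝕋₂)` (the triangle inequalities between
`√(p12 p34)`, `√(p13 p24)`, `√(p14 p23)` hold) iff `L(p)` has at most one
positive eigenvalue. -/
theorem mem_DeltaT2_iff_lorentzian (p12 p13 p14 p23 p24 p34 : ℝ)
    (h12 : 0 ≤ p12) (h13 : 0 ≤ p13) (h14 : 0 ≤ p14)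
    (h23 : 0 ≤ p23) (h24 : 0 ≤ p24) (h34 : 0 ≤ p34)
    (hL : (Lmat p12 p13 p14 p23 p24 p34).IsHermitian) :
    (Real.sqrt (p13*p24) + Real.sqrt (p14*p23) ≥ Real.sqrt (p12*p34) ∧
     Real.sqrt (p12*p34) + Real.sqrt (p14*p23) ≥ Real.sqrt (p13*p24) ∧
     Real.sqrt (p12*p34) + Real.sqrt (p13*p24) ≥ Real.sqrt (p14*p23)) ↔
    (Finset.univ.filter fun i => 0 < hL.eigenvalues i).card ≤ 1 := by
  have hsum : ∑ i, hL.eigenvalues i = 0 := by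
    simpa [trace_Lmat] using hL.trace_eq_sum_eigenvalues.symm
  have hcube : 0 ≤ ∑ i, hL.eigenvalues i ^ 3 := by
    have htrace := hL.trace_pow_eq_sum_eigenvalues_pow 3
    simp only [trace_Lmat_pow_three, RCLike.ofReal_real_eq_id, id] at htrace
    rw [← htrace]
    positivity
  have hdet : (Lmat p12 p13 p14 p23 p24 p34).det = ∏ i, hL.eigenvalues i := by
    simpa using hL.det_eq_prod_eigenvalues
  simp only [ge_iff_le]
  rw [sqrt_triangle_iff (mul_nonneg h12 h34) (mul_nonneg h13 h24) (mul_nonneg h14 h23),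
    ← det_Lmat, hdet]
  exact prod_nonpos_iff_card_pos_le_one hsum hcube
end

section
/- Every real symmetric 3×3 matrix with nonnegative off-diagonal entries and zero diagonal entries has at most one positive eigenvalue. -/
set_option maxRecDepth 8000
set_option maxHeartbeats 1000000

open Matrix

lemma conj_pow_aux {M : Type*} [Monoid M] (U D V : M) (hVU : V * U = 1) (hUV : U * V = 1)
    (k : ℕ) : (U * D * V) ^ k = U * D ^ k * V := by
  induction k with
  | zero => simp [hUV]
  | succ m ih =>
    rw [pow_succ, pow_succ, ih, show U * D ^ m * V * (U * D * V) = U * D ^ m * (V * U) * D * V by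
      simp [mul_assoc], hVU, mul_one, mul_assoc U (D ^ m) D]

lemma cube_aux (a b c : ℝ) (ha : 0 < a) (hb : 0 < b) (h1 : a + b + c = 0)
    (h3 : 0 ≤ a ^ 3 + b ^ 3 + c ^ 3) : False := by
  have hc : c = -a - b := by linarith
  subst hc
  nlinarith [mul_pos (mul_pos ha hb) (add_pos ha hb)]

lemma trace_pow_eq_sum {n : ℕ} {A : Matrix (Fin n) (Fin n) ℝ} (hA : A.IsHermitian) (k : ℕ) :
    (A ^ k).trace = ∑ i, hA.eigenvalues i ^ k := by
  have hU := (Matrix.mem_unitaryGroup_iff').mp (hA.eigenvectorUnitary).2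
  have hU' := (Matrix.mem_unitaryGroup_iff).mp (hA.eigenvectorUnitary).2
  have h : A ^ k = (hA.eigenvectorUnitary : Matrix (Fin n) (Fin n) ℝ) *
      (Matrix.diagonal (RCLike.ofReal ∘ hA.eigenvalues)) ^ k *
      star (hA.eigenvectorUnitary : Matrix (Fin n) (Fin n) ℝ) := by
    conv_lhs => rw [hA.spectral_theorem]
    exact conj_pow_aux _ _ _ hU hU' k
  rw [h, Matrix.trace_mul_cycle, hU, Matrix.one_mul, Matrix.diagonal_pow, Matrix.trace_diagonal]
  simp [RCLike.ofReal]

/-- Any real symmetric 3×3 matrix with zero diagonal and nonnegative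
off-diagonal entries has at most one positive eigenvalue. -/
theorem three_by_three_hollow_nonneg_at_most_one_pos_eigenvalue
    (A : Matrix (Fin 3) (Fin 3) ℝ) (hA : A.IsHermitian)
    (hdiag : ∀ i, A i i = 0) (hoff : ∀ i j, 0 ≤ A i j) :
    (Finset.univ.filter fun i => 0 < hA.eigenvalues i).card ≤ 1 := by
  by_contra h
  push_neg at h
  obtain ⟨i, hi, j, hj, hij⟩ := Finset.one_lt_card.mp h
  simp only [Finset.mem_filter, Finset.mem_univ, true_and] at hi hj
  have h1 : ∑ i, hA.eigenvalues i = 0 := by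
    have := trace_pow_eq_sum hA 1
    simp only [pow_one] at this
    rw [← this, Matrix.trace]
    simp [Matrix.diag, hdiag]
  have h3 : 0 ≤ ∑ i, hA.eigenvalues i ^ 3 := by
    rw [← trace_pow_eq_sum hA 3, Matrix.trace]
    apply Finset.sum_nonneg
    intro x _
    show 0 ≤ (A ^ 3) x x
    rw [pow_succ, pow_two, Matrix.mul_apply]
    apply Finset.sum_nonneg
    intro y _
    apply mul_nonneg _ (hoff _ _)
    rw [Matrix.mul_apply]
    exact Finset.sum_nonneg fun z _ => mul_nonneg (hoff _ _) (hoff _ _)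
  rw [Fin.sum_univ_three] at h1 h3
  fin_cases i <;> fin_cases j <;> simp_all <;>
    first
      | exact cube_aux _ _ (hA.eigenvalues 2) hi hj (by linarith) (by linarith)
      | exact cube_aux _ _ (hA.eigenvalues 1) hi hj (by linarith) (by linarith)
      | exact cube_aux _ _ (hA.eigenvalues 0) hi hj (by linarith) (by linarith)
end

section
/- For any vector of positive reals p = (p12,p13,p14,p23,p24,p34), there exist λ > 0 and c1,c2,c3,c4 > 0 such that the rescaled vector λ·(c1c2·p12, c1c3·p13, c1c4·p14, c2c3·p23, c2c4·p24, c3c4·p34) equals (√(p12p34), √(p13p24), √(p14p23), √(p14p23), √(p13p24), √(p12p34)). -/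
private lemma sqrt_mul_sqrt_eq (P Q r : ℝ) (hP : 0 ≤ P) (hr : 0 ≤ r) (h : P * Q = r ^ 2) :
    Real.sqrt P * Real.sqrt Q = r := by
  rw [← Real.sqrt_mul hP, h, Real.sqrt_sq hr]

/-- Every positive vector is equivalent, via the torus action
`p_{ij} ↦ λ c_i c_j p_{ij}`, to the symmetric vector
`(√(p12 p34), √(p13 p24), √(p14 p23), √(p14 p23), √(p13 p24), √(p12 p34))`. -/
theorem symmetrization (p12 p13 p14 p23 p24 p34 : ℝ)
    (h12 : 0 < p12) (h13 : 0 < p13) (h14 : 0 < p14)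
    (h23 : 0 < p23) (h24 : 0 < p24) (h34 : 0 < p34) :
    ∃ lam c1 c2 c3 c4 : ℝ, 0 < lam ∧ 0 < c1 ∧ 0 < c2 ∧ 0 < c3 ∧ 0 < c4 ∧
      lam * (c1 * c2 * p12) = Real.sqrt (p12 * p34) ∧
      lam * (c1 * c3 * p13) = Real.sqrt (p13 * p24) ∧
      lam * (c1 * c4 * p14) = Real.sqrt (p14 * p23) ∧
      lam * (c2 * c3 * p23) = Real.sqrt (p14 * p23) ∧
      lam * (c2 * c4 * p24) = Real.sqrt (p13 * p24) ∧
      lam * (c3 * c4 * p34) = Real.sqrt (p12 * p34) := by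
  set a := Real.sqrt (p34 / p12) with ha
  set b := Real.sqrt (p24 / p13) with hb
  set c := Real.sqrt (p23 / p14) with hc
  have hap : 0 < a := Real.sqrt_pos.mpr (by positivity)
  have hbp : 0 < b := Real.sqrt_pos.mpr (by positivity)
  have hcp : 0 < c := Real.sqrt_pos.mpr (by positivity)
  have ha2 : a ^ 2 = p34 / p12 := Real.sq_sqrt (by positivity)
  have hb2 : b ^ 2 = p24 / p13 := Real.sq_sqrt (by positivity)
  have hc2 : c ^ 2 = p23 / p14 := Real.sq_sqrt (by positivity)
  refine ⟨1, Real.sqrt (a * b * c), Real.sqrt (a / (b * c)),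
    Real.sqrt (b / (a * c)), Real.sqrt (c / (a * b)),
    one_pos, Real.sqrt_pos.mpr (by positivity), Real.sqrt_pos.mpr (by positivity),
    Real.sqrt_pos.mpr (by positivity), Real.sqrt_pos.mpr (by positivity), ?_, ?_, ?_, ?_, ?_, ?_⟩
  · have h1 : Real.sqrt (a * b * c) * Real.sqrt (a / (b * c)) = a :=
      sqrt_mul_sqrt_eq _ _ _ (by positivity) hap.le (by field_simp)
    rw [one_mul, h1]
    rw [show a * p12 = Real.sqrt (p34 / p12) * Real.sqrt (p12 ^ 2) from by
      rw [Real.sqrt_sq h12.le, ha], ← Real.sqrt_mul (by positivity)]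
    congr 1; field_simp
  · have h1 : Real.sqrt (a * b * c) * Real.sqrt (b / (a * c)) = b :=
      sqrt_mul_sqrt_eq _ _ _ (by positivity) hbp.le (by field_simp)
    rw [one_mul, h1]
    rw [show b * p13 = Real.sqrt (p24 / p13) * Real.sqrt (p13 ^ 2) from by
      rw [Real.sqrt_sq h13.le, hb], ← Real.sqrt_mul (by positivity)]
    congr 1; field_simp
  · have h1 : Real.sqrt (a * b * c) * Real.sqrt (c / (a * b)) = c :=
      sqrt_mul_sqrt_eq _ _ _ (by positivity) hcp.le (by field_simp)
    rw [one_mul, h1]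
    rw [show c * p14 = Real.sqrt (p23 / p14) * Real.sqrt (p14 ^ 2) from by
      rw [Real.sqrt_sq h14.le, hc], ← Real.sqrt_mul (by positivity)]
    congr 1; field_simp
  · have h1 : Real.sqrt (a / (b * c)) * Real.sqrt (b / (a * c)) = 1 / c :=
      sqrt_mul_sqrt_eq _ _ _ (by positivity) (by positivity) (by field_simp)
    rw [one_mul, h1]
    rw [show 1 / c * p23 = Real.sqrt (p14 / p23) * Real.sqrt (p23 ^ 2) from by
      rw [Real.sqrt_sq h23.le, hc, one_div, ← Real.sqrt_inv, inv_div],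
      ← Real.sqrt_mul (by positivity)]
    congr 1; field_simp
  · have h1 : Real.sqrt (a / (b * c)) * Real.sqrt (c / (a * b)) = 1 / b :=
      sqrt_mul_sqrt_eq _ _ _ (by positivity) (by positivity) (by field_simp)
    rw [one_mul, h1]
    rw [show 1 / b * p24 = Real.sqrt (p13 / p24) * Real.sqrt (p24 ^ 2) from by
      rw [Real.sqrt_sq h24.le, hb, one_div, ← Real.sqrt_inv, inv_div],
      ← Real.sqrt_mul (by positivity)]
    congr 1; field_simp
  · have h1 : Real.sqrt (b / (a * c)) * Real.sqrt (c / (a * b)) = 1 / a :=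
      sqrt_mul_sqrt_eq _ _ _ (by positivity) (by positivity) (by field_simp)
    rw [one_mul, h1]
    rw [show 1 / a * p34 = Real.sqrt (p12 / p34) * Real.sqrt (p34 ^ 2) from by
      rw [Real.sqrt_sq h34.le, ha, one_div, ← Real.sqrt_inv, inv_div],
      ← Real.sqrt_mul (by positivity)]
    congr 1; field_simp
end

section
/- Let Q = (q12,q13,q14,q23,q24,q34) be nonnegative reals with q14, q24, q34 all positive and satisfying q_{ik}q_{jl} + q_{il}q_{jk} ≥ q_{ij}q_{kl} for all distinct i,j,k,l. Then in the ring ℝ[H1,H2,H3,H4]/(H1², H2², H3², H4²), the element 2·q14·q24·q34·(q12 H1H2 + q13 H1H3 + q14 H1H4 + q23 H2H3 + q24 H2H4 + q34 H3H4) factors as the product (q14 H1 + q24 H2 + q34 H3)·(q_{14|23}·q14 H1 + q_{13|24}·q24 H2 + q_{12|34}·q34 H3 + 2 q14 q24 q34 H4), where q_{ij|kl} := q_{ik}q_{jl} + q_{il}q_{jk} − q_{ij}q_{kl}, and all coefficients in both factors are nonnegative. -/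
open MvPolynomial

/-- The cohomology ring of `(ℙ¹)⁴`: real polynomials in `H₁,…,H₄` modulo `Hᵢ² = 0`. -/
noncomputable abbrev CohomP14 : Type :=
  MvPolynomial (Fin 4) ℝ ⧸
    Ideal.span (Set.range fun i : Fin 4 => (X i : MvPolynomial (Fin 4) ℝ) ^ 2)

/-- The hyperplane classes `Hᵢ`. -/
noncomputable def Hcl (i : Fin 4) : CohomP14 :=
  Ideal.Quotient.mk _ (X i)

lemma cohom_smul_def (r : ℝ) (x : CohomP14) :
    r • x = algebraMap ℝ CohomP14 r * x :=
  Algebra.smul_def r x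

set_option maxHeartbeats 2000000 in
/-- The factorization used to show Δ(𝕋₁) classes are complete intersections up to a
positive multiple, together with the nonnegativity of all the coefficients involved. -/
theorem factorization_T1 (q12 q13 q14 q23 q24 q34 : ℝ)
    (h12 : 0 ≤ q12) (h13 : 0 ≤ q13) (h23 : 0 ≤ q23)
    (h14 : 0 < q14) (h24 : 0 < q24) (h34 : 0 < q34)
    (t1 : q13 * q24 + q14 * q23 ≥ q12 * q34)
    (t2 : q12 * q34 + q14 * q23 ≥ q13 * q24)
    (t3 : q12 * q34 + q13 * q24 ≥ q14 * q23) :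
    ((2 * q14 * q24 * q34) •
        (q12 • (Hcl 0 * Hcl 1) + q13 • (Hcl 0 * Hcl 2) + q14 • (Hcl 0 * Hcl 3) +
          q23 • (Hcl 1 * Hcl 2) + q24 • (Hcl 1 * Hcl 3) + q34 • (Hcl 2 * Hcl 3)) =
      (q14 • Hcl 0 + q24 • Hcl 1 + q34 • Hcl 2) *
        (((q12 * q34 + q13 * q24 - q14 * q23) * q14) • Hcl 0 +
         ((q12 * q34 + q14 * q23 - q13 * q24) * q24) • Hcl 1 +
         ((q13 * q24 + q14 * q23 - q12 * q34) * q34) • Hcl 2 +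
         (2 * q14 * q24 * q34) • Hcl 3)) ∧
    0 ≤ q12 * q34 + q13 * q24 - q14 * q23 ∧
    0 ≤ q12 * q34 + q14 * q23 - q13 * q24 ∧
    0 ≤ q13 * q24 + q14 * q23 - q12 * q34 := by
  have hsq : ∀ i : Fin 4, Hcl i * Hcl i = 0 := by
    intro i
    have : (Ideal.Quotient.mk _ ((X i : MvPolynomial (Fin 4) ℝ) ^ 2) : CohomP14) = 0 := by
      rw [Ideal.Quotient.eq_zero_iff_mem]
      exact Ideal.subset_span ⟨i, rfl⟩
    simpa [Hcl, sq, map_mul] using this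
  refine ⟨?_, by nlinarith, by nlinarith, by nlinarith⟩
  have h0 := hsq 0
  have h1 := hsq 1
  have h2 := hsq 2
  simp only [cohom_smul_def]
  simp only [map_mul, map_add, map_sub, map_ofNat]
  set A := algebraMap ℝ CohomP14 with hA
  linear_combination (-(A q14 * A q14 * (A q12 * A q34 + A q13 * A q24 - A q14 * A q23))) * h0 +
    (-(A q24 * A q24 * (A q12 * A q34 + A q14 * A q23 - A q13 * A q24))) * h1 +
    (-(A q34 * A q34 * (A q13 * A q24 + A q14 * A q23 - A q12 * A q34))) * h2
end

section
/- Let D1, D2, D3 be the three line segments in ℝ⁴: D1 from e1+e2 to e3+e4, D2 from e1+e3 to e2+e4, D3 from e1+e4 to e2+e3. Then the vector of mixed areas of projections (A∧B)_{ij} := MV(π_{ij}(A), π_{ij}(B)) satisfies: D1∧D2 = (2,2,0,0,2,2), D1∧D3 = (2,0,2,2,0,2), D2∧D3 = (0,2,2,2,2,0), and D_k∧D_k = (0,0,0,0,0,0) for each k. -/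
/-!
The Minkowski sum of the segments `[a, b]` and `[c, d]` in the plane is a translate of the
parallelogram spanned by `b - a` and `d - c`, of area `|det (b - a, d - c)|`, while segments are
null sets; so the mixed area of two segments is that absolute determinant. Coordinate projections
map segments to segments, so each entry of `[p, q] ∧ [r, s]` is the absolute value of a `2 × 2`
minor of the `4 × 2` matrix with columns `q - p` and `s - r`.
-/

open MeasureTheory Pointwise

/-- Normalized mixed area of two planar convex bodies:
`MV(K,L) = vol(K+L) − vol(K) − vol(L)`, so that `MV(K,K)` is the normalized
area of `K` (the unit square having area 2). -/
noncomputable def mixedArea (K L : Set (Fin 2 → ℝ)) : ℝ :=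
  (volume (K + L)).toReal - (volume K).toReal - (volume L).toReal

/-- The coordinate projection of `ℝ⁴` keeping coordinates `a` and `b`. -/
def coordProj (a b : Fin 4) (x : Fin 4 → ℝ) : Fin 2 → ℝ := ![x a, x b]

/-- `p_{ij}(A,B)` where `a b` are the two retained coordinates (those other
than `i` and `j`). -/
noncomputable def projMV (a b : Fin 4) (A B : Set (Fin 4 → ℝ)) : ℝ :=
  mixedArea (coordProj a b '' A) (coordProj a b '' B)

/-- The vector `A ∧ B = (p12, p13, p14, p23, p24, p34)` of mixed areas of the
six coordinate projections. -/
noncomputable def wedgeVec (A B : Set (Fin 4 → ℝ)) : Fin 6 → ℝ :=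
  ![projMV 2 3 A B, projMV 1 3 A B, projMV 1 2 A B,
    projMV 0 3 A B, projMV 0 2 A B, projMV 0 1 A B]

/-- The segment `D_{12|34}` from `e₁+e₂` to `e₃+e₄`. -/
def D1 : Set (Fin 4 → ℝ) := segment ℝ ![1,1,0,0] ![0,0,1,1]

/-- The segment `D_{13|24}` from `e₁+e₃` to `e₂+e₄`. -/
def D2 : Set (Fin 4 → ℝ) := segment ℝ ![1,0,1,0] ![0,1,0,1]

/-- The segment `D_{14|23}` from `e₁+e₄` to `e₂+e₃`. -/
def D3 : Set (Fin 4 → ℝ) := segment ℝ ![1,0,0,1] ![0,1,1,0]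

theorem Real.volume_parallelepiped {ι : Type*} [Fintype ι] [DecidableEq ι] (v : ι → ι → ℝ) :
    volume (parallelepiped v) = ENNReal.ofReal |(Matrix.of v).det| := by
  rw [← addHaarMeasure_eq_volume_pi, ← Module.Basis.parallelepiped_basisFun,
    ← Module.Basis.addHaar_def, Measure.addHaar_parallelepiped, Pi.basisFun_det_apply]

section Segment

variable {E : Type*}

theorem vadd_segment_zero_sub [AddCommGroup E] [Module ℝ E] (a b : E) :
    a +ᵥ segment ℝ 0 (b - a) = segment ℝ a b := by
  simp [vadd_segment]

theorem segment_add_segment [AddCommGroup E] [Module ℝ E] (a b c d : E) :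
    segment ℝ a b + segment ℝ c d = (a + c) +ᵥ parallelepiped ![b - a, d - c] := by
  rw [parallelepiped_eq_sum_segment, Fin.sum_univ_two, ← vadd_segment_zero_sub a b,
    ← vadd_segment_zero_sub c d, vadd_add_assoc, add_vadd_comm, vadd_vadd]
  rfl

theorem MeasureTheory.Measure.addHaar_segment [NormedAddCommGroup E] [NormedSpace ℝ E]
    [MeasurableSpace E] [BorelSpace E] [FiniteDimensional ℝ E] (μ : Measure E) [μ.IsAddHaarMeasure]
    (h : 1 < Module.finrank ℝ E) (a b : E) : μ (segment ℝ a b) = 0 := by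
  have hspan : Submodule.span ℝ {b - a} ≠ ⊤ :=
    (span_lt_top_of_card_lt_finrank (by simpa using h)).ne
  rw [← vadd_segment_zero_sub, measure_vadd]
  refine measure_mono_null ?_ (Measure.addHaar_submodule μ _ hspan)
  exact (Submodule.convex _).segment_subset (Submodule.zero_mem _)
    (Submodule.mem_span_singleton_self _)

end Segment

theorem volume_segment_add_segment (a b c d : Fin 2 → ℝ) :
    volume (segment ℝ a b + segment ℝ c d)
      = ENNReal.ofReal |(b 0 - a 0) * (d 1 - c 1) - (b 1 - a 1) * (d 0 - c 0)| := by
  rw [segment_add_segment, measure_vadd, Real.volume_parallelepiped, Matrix.det_fin_two]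
  simp

theorem mixedArea_segment_segment (a b c d : Fin 2 → ℝ) :
    mixedArea (segment ℝ a b) (segment ℝ c d)
      = |(b 0 - a 0) * (d 1 - c 1) - (b 1 - a 1) * (d 0 - c 0)| := by
  have hfinrank : 1 < Module.finrank ℝ (Fin 2 → ℝ) := by simp
  rw [mixedArea, volume_segment_add_segment, Measure.addHaar_segment _ hfinrank,
    Measure.addHaar_segment _ hfinrank, ENNReal.toReal_ofReal (abs_nonneg _)]
  simp

def coordProjₗ (a b : Fin 4) : (Fin 4 → ℝ) →ₗ[ℝ] (Fin 2 → ℝ) :=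
  LinearMap.pi ![LinearMap.proj a, LinearMap.proj b]

theorem coe_coordProjₗ (a b : Fin 4) : ⇑(coordProjₗ a b) = coordProj a b := by
  ext x i
  fin_cases i <;> rfl

theorem projMV_segment_segment (a b : Fin 4) (p q r s : Fin 4 → ℝ) :
    projMV a b (segment ℝ p q) (segment ℝ r s)
      = |(q a - p a) * (s b - r b) - (q b - p b) * (s a - r a)| := by
  simp only [projMV, ← coe_coordProjₗ, ← LinearMap.coe_toAffineMap, image_segment,
    mixedArea_segment_segment]
  simp [coordProjₗ]

theorem projMV_segment_self (a b : Fin 4) (p q : Fin 4 → ℝ) :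
    projMV a b (segment ℝ p q) (segment ℝ p q) = 0 := by
  rw [projMV_segment_segment, mul_comm, sub_self, abs_zero]

theorem wedgeVec_segment_self (p q : Fin 4 → ℝ) :
    wedgeVec (segment ℝ p q) (segment ℝ p q) = ![0,0,0,0,0,0] := by
  simp only [wedgeVec, projMV_segment_self]

theorem wedge_of_segments :
    wedgeVec D1 D2 = ![2,2,0,0,2,2] ∧
    wedgeVec D1 D3 = ![2,0,2,2,0,2] ∧
    wedgeVec D2 D3 = ![0,2,2,2,2,0] ∧
    wedgeVec D1 D1 = ![0,0,0,0,0,0] ∧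
    wedgeVec D2 D2 = ![0,0,0,0,0,0] ∧
    wedgeVec D3 D3 = ![0,0,0,0,0,0] := by
  refine ⟨?_, ?_, ?_, wedgeVec_segment_self _ _, wedgeVec_segment_self _ _,
    wedgeVec_segment_self _ _⟩ <;>
  · simp only [wedgeVec, D1, D2, D3, projMV_segment_segment]
    norm_num [Matrix.cons_val_two, Matrix.cons_val_three]
end

section
/- Let p = (p12,p13,p14,p23,p24,p34) be a nonzero vector of nonnegative reals in Δ(𝕋₂) with at least one zero entry. Then either all three products p12·p34, p13·p24, p14·p23 are zero, or exactly one of them is zero and the other two are equal. -/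
lemma sqrt_tri_eq (x y z : ℝ) (hy : 0 ≤ y) (hz : 0 ≤ z)
    (h1 : Real.sqrt y ≤ Real.sqrt x + Real.sqrt z)
    (h2 : Real.sqrt z ≤ Real.sqrt x + Real.sqrt y)
    (hx : x = 0) : y = z := by
  subst hx
  simp only [Real.sqrt_zero, zero_add] at h1 h2
  have : Real.sqrt y = Real.sqrt z := le_antisymm h1 h2
  have := congrArg (fun t => t^2) this
  simpa [Real.sq_sqrt hy, Real.sq_sqrt hz] using this

/-- If a nonzero nonnegative vector in `Δ(𝕋₂)` has a zero entry, then either all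
three products `p12·p34, p13·p24, p14·p23` vanish, or exactly one of them
vanishes and the other two are equal. -/
theorem zero_entry_dichotomy (p12 p13 p14 p23 p24 p34 : ℝ)
    (h12 : 0 ≤ p12) (h13 : 0 ≤ p13) (h14 : 0 ≤ p14)
    (h23 : 0 ≤ p23) (h24 : 0 ≤ p24) (h34 : 0 ≤ p34)
    (hne : ¬(p12 = 0 ∧ p13 = 0 ∧ p14 = 0 ∧ p23 = 0 ∧ p24 = 0 ∧ p34 = 0))
    (hzero : p12 = 0 ∨ p13 = 0 ∨ p14 = 0 ∨ p23 = 0 ∨ p24 = 0 ∨ p34 = 0)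
    (t1 : Real.sqrt (p12*p34) ≤ Real.sqrt (p13*p24) + Real.sqrt (p14*p23))
    (t2 : Real.sqrt (p13*p24) ≤ Real.sqrt (p12*p34) + Real.sqrt (p14*p23))
    (t3 : Real.sqrt (p14*p23) ≤ Real.sqrt (p12*p34) + Real.sqrt (p13*p24)) :
    (p12*p34 = 0 ∧ p13*p24 = 0 ∧ p14*p23 = 0) ∨
    (p12*p34 = 0 ∧ p13*p24 = p14*p23 ∧ p13*p24 ≠ 0) ∨
    (p13*p24 = 0 ∧ p12*p34 = p14*p23 ∧ p12*p34 ≠ 0) ∨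
    (p14*p23 = 0 ∧ p12*p34 = p13*p24 ∧ p12*p34 ≠ 0) := by
  have hy : 0 ≤ p13*p24 := mul_nonneg h13 h24
  have hz : 0 ≤ p14*p23 := mul_nonneg h14 h23
  have hx : 0 ≤ p12*p34 := mul_nonneg h12 h34
  have hprod : p12*p34 = 0 ∨ p13*p24 = 0 ∨ p14*p23 = 0 := by
    rcases hzero with h|h|h|h|h|h
    · exact Or.inl (by rw [h]; ring)
    · exact Or.inr (Or.inl (by rw [h]; ring))
    · exact Or.inr (Or.inr (by rw [h]; ring))
    · exact Or.inr (Or.inr (by rw [h]; ring))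
    · exact Or.inr (Or.inl (by rw [h]; ring))
    · exact Or.inl (by rw [h]; ring)
  rcases hprod with h|h|h
  · have heq := sqrt_tri_eq _ _ _ hy hz t2 t3 h
    by_cases hy0 : p13*p24 = 0
    · exact Or.inl ⟨h, hy0, heq ▸ hy0⟩
    · exact Or.inr (Or.inl ⟨h, heq, hy0⟩)
  · have heq := sqrt_tri_eq _ _ _ hx hz (by linarith) (by linarith) h
    by_cases hx0 : p12*p34 = 0
    · exact Or.inl ⟨hx0, h, heq ▸ hx0⟩
    · exact Or.inr (Or.inr (Or.inl ⟨h, heq, hx0⟩))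
  · have heq := sqrt_tri_eq _ _ _ hx hy (by linarith) (by linarith) h
    by_cases hx0 : p12*p34 = 0
    · exact Or.inl ⟨hx0, heq ▸ hx0, h⟩
    · exact Or.inr (Or.inr (Or.inr ⟨h, heq, hx0⟩))
end
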